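/- The class of lattices has the amalgamation property: whenever A, B₁, B₂ are lattices and f₁ : A → B₁ and f₂ : A → B₂ are injective lattice homomorphisms, there exist a lattice D and injective lattice homomorphisms g₁ : B₁ → D and g₂ : B₂ → D such that g₁ ∘ f₁ = g₂ ∘ f₂. -/

import Mathlib

/-!
Glue `B₁` and `B₂` along `A`: on their disjoint union, let `x ∈ Bᵢ` lie below `y ∈ Bⱼ` (`i ≠ j`)
when `x ≤ fᵢ a` and `fⱼ a ≤ y` for some `a ∈ A`. Since the `fᵢ` are order embeddings this is a
preorder in which each `Bᵢ` sits as an order embedding and `f₁ a`, `f₂ a` are equivalent; since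
the `fᵢ` preserve `⊔` and `⊓`, joins and meets in `Bᵢ` stay least upper and greatest lower bounds
in the union. The Dedekind–MacNeille completion of this preorder is a lattice, and the principal
cut map preserves every join and meet that already exists.
-/

open Function Set

namespace DedekindCut

variable {α : Type*} [Preorder α] {a b c : α}

theorem principal_eq_sup_of_isLUB (h : IsLUB {a, b} c) : principal c = principal a ⊔ principal b :=
  ext' <| by simp [← h.upperBounds_eq, upperBounds_insert]

theorem principal_eq_inf_of_isGLB (h : IsGLB {a, b} c) : principal c = principal a ⊓ principal b :=
  ext <| by simp [← h.lowerBounds_eq, lowerBounds_insert]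

end DedekindCut

variable {ι A : Type*} {B : ι → Type*}

def Amalgam [Preorder A] [∀ i, Preorder (B i)] (_f : ∀ i, A ↪o B i) : Type _ := Σ i, B i

namespace Amalgam

open DedekindCut

section Preorder

variable [Preorder A] [∀ i, Preorder (B i)] (f : ∀ i, A ↪o B i)

def mk (i : ι) (x : B i) : Amalgam f := ⟨i, x⟩

instance : Preorder (Amalgam f) where
  le p q := Sigma.LE p q ∨ ∃ a, p.2 ≤ f p.1 a ∧ f q.1 a ≤ q.2
  le_refl p := Or.inl (.fiber _ _ _ le_rfl)
  le_trans := by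
    rintro p q r (⟨i, x, y, hxy⟩ | ⟨a, hxa, hay⟩) (⟨_, _, z, hyz⟩ | ⟨b, hyb, hbz⟩)
    · exact Or.inl (.fiber _ _ _ (hxy.trans hyz))
    · exact Or.inr ⟨b, hxy.trans hyb, hbz⟩
    · exact Or.inr ⟨a, hxa, hay.trans hyz⟩
    · exact Or.inr ⟨b, hxa.trans ((f _).monotone ((f _).le_iff_le.1 (hay.trans hyb))), hbz⟩

variable {f}

theorem mk_le_mk_iff {i : ι} {x y : B i} : mk f i x ≤ mk f i y ↔ x ≤ y :=
  ⟨by rintro (h | ⟨a, hxa, hay⟩); exacts [Sigma.mk_le_mk_iff.1 h, hxa.trans hay],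
    fun h => Or.inl (.fiber _ _ _ h)⟩

theorem mk_le_mk_iff_of_ne {i j : ι} (hij : i ≠ j) {x : B i} {y : B j} :
    mk f i x ≤ mk f j y ↔ ∃ a, x ≤ f i a ∧ f j a ≤ y :=
  or_iff_right <| by rintro ⟨⟩; exact hij rfl

theorem mk_map_le_mk_map (i j : ι) (a : A) : mk f i (f i a) ≤ mk f j (f j a) :=
  Or.inr ⟨a, le_rfl, le_rfl⟩

theorem principal_mk_map (i j : ι) (a : A) :
    principal (mk f i (f i a)) = principal (mk f j (f j a)) :=
  le_antisymm (principal_le_principal.2 (mk_map_le_mk_map i j a))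
    (principal_le_principal.2 (mk_map_le_mk_map j i a))

end Preorder

theorem principal_mk_injective [Preorder A] [∀ i, PartialOrder (B i)] {f : ∀ i, A ↪o B i}
    (i : ι) : Injective fun x : B i => principal (mk f i x) :=
  fun _ _ h => le_antisymm (mk_le_mk_iff.1 (principal_le_principal.1 h.le))
    (mk_le_mk_iff.1 (principal_le_principal.1 h.ge))

section Lattice

variable [Lattice A] [∀ i, Lattice (B i)] {f : ∀ i, A ↪o B i}

theorem isLUB_mk_sup (hf : ∀ j a b, f j (a ⊔ b) = f j a ⊔ f j b) {i : ι} (x y : B i) :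
    IsLUB {mk f i x, mk f i y} (mk f i (x ⊔ y)) := by
  refine ⟨by simp [upperBounds, mk_le_mk_iff], fun q hq => ?_⟩
  obtain ⟨hx, hy⟩ : mk f i x ≤ q ∧ mk f i y ≤ q := ⟨hq (by simp), hq (by simp)⟩
  obtain ⟨j, w, rfl⟩ : ∃ j w, q = mk f j w := ⟨q.1, q.2, rfl⟩
  by_cases hij : i = j
  · subst hij
    exact mk_le_mk_iff.2 (sup_le (mk_le_mk_iff.1 hx) (mk_le_mk_iff.1 hy))
  obtain ⟨a, hxa, haw⟩ := (mk_le_mk_iff_of_ne hij).1 hx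
  obtain ⟨b, hyb, hbw⟩ := (mk_le_mk_iff_of_ne hij).1 hy
  refine (mk_le_mk_iff_of_ne hij).2 ⟨a ⊔ b, ?_, hf j a b ▸ sup_le haw hbw⟩
  exact sup_le (hxa.trans ((f i).monotone le_sup_left)) (hyb.trans ((f i).monotone le_sup_right))

theorem isGLB_mk_inf (hf : ∀ j a b, f j (a ⊓ b) = f j a ⊓ f j b) {i : ι} (x y : B i) :
    IsGLB {mk f i x, mk f i y} (mk f i (x ⊓ y)) := by
  refine ⟨by simp [lowerBounds, mk_le_mk_iff], fun q hq => ?_⟩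
  obtain ⟨hx, hy⟩ : q ≤ mk f i x ∧ q ≤ mk f i y := ⟨hq (by simp), hq (by simp)⟩
  obtain ⟨j, w, rfl⟩ : ∃ j w, q = mk f j w := ⟨q.1, q.2, rfl⟩
  by_cases hji : j = i
  · subst hji
    exact mk_le_mk_iff.2 (le_inf (mk_le_mk_iff.1 hx) (mk_le_mk_iff.1 hy))
  obtain ⟨a, hwa, hax⟩ := (mk_le_mk_iff_of_ne hji).1 hx
  obtain ⟨b, hwb, hby⟩ := (mk_le_mk_iff_of_ne hji).1 hy
  refine (mk_le_mk_iff_of_ne hji).2 ⟨a ⊓ b, hf j a b ▸ le_inf hwa hwb, ?_⟩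
  exact le_inf (((f i).monotone inf_le_left).trans hax) (((f i).monotone inf_le_right).trans hby)

theorem principal_mk_sup (hf : ∀ j a b, f j (a ⊔ b) = f j a ⊔ f j b) {i : ι} (x y : B i) :
    principal (mk f i (x ⊔ y)) = principal (mk f i x) ⊔ principal (mk f i y) :=
  principal_eq_sup_of_isLUB (isLUB_mk_sup hf x y)

theorem principal_mk_inf (hf : ∀ j a b, f j (a ⊓ b) = f j a ⊓ f j b) {i : ι} (x y : B i) :
    principal (mk f i (x ⊓ y)) = principal (mk f i x) ⊓ principal (mk f i y) :=
  principal_eq_inf_of_isGLB (isGLB_mk_inf hf x y)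

end Lattice

end Amalgam

open Amalgam DedekindCut in
/-- The class of lattices has the amalgamation property. -/
theorem lattice_amalgamation (A B₁ B₂ : Type) [Lattice A] [Lattice B₁] [Lattice B₂]
    (f₁ : A → B₁) (f₂ : A → B₂)
    (hf₁ : Function.Injective f₁) (hf₂ : Function.Injective f₂)
    (hom₁ : ∀ a b : A, f₁ (a ⊔ b) = f₁ a ⊔ f₁ b ∧ f₁ (a ⊓ b) = f₁ a ⊓ f₁ b)
    (hom₂ : ∀ a b : A, f₂ (a ⊔ b) = f₂ a ⊔ f₂ b ∧ f₂ (a ⊓ b) = f₂ a ⊓ f₂ b) :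
    ∃ (D : Type) (_ : Lattice D) (g₁ : B₁ → D) (g₂ : B₂ → D),
      Function.Injective g₁ ∧ Function.Injective g₂ ∧
      (∀ a b : B₁, g₁ (a ⊔ b) = g₁ a ⊔ g₁ b ∧ g₁ (a ⊓ b) = g₁ a ⊓ g₁ b) ∧
      (∀ a b : B₂, g₂ (a ⊔ b) = g₂ a ⊔ g₂ b ∧ g₂ (a ⊓ b) = g₂ a ⊓ g₂ b) ∧
      g₁ ∘ f₁ = g₂ ∘ f₂ := by
  let e₁ : A ↪o B₁ := orderEmbeddingOfInjective (InfHom.mk f₁ fun a b => (hom₁ a b).2) hf₁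
  let e₂ : A ↪o B₂ := orderEmbeddingOfInjective (InfHom.mk f₂ fun a b => (hom₂ a b).2) hf₂
  let B : Bool → Type := fun i => bif i then B₂ else B₁
  let _ : ∀ i, Lattice (B i) := fun i => match i with | false => ‹_› | true => ‹_›
  let f : ∀ i, A ↪o B i := fun i => match i with | false => e₁ | true => e₂
  have hsup : ∀ i a b, f i (a ⊔ b) = f i a ⊔ f i b := by
    rintro (_ | _) a b
    exacts [(hom₁ a b).1, (hom₂ a b).1]
  have hinf : ∀ i a b, f i (a ⊓ b) = f i a ⊓ f i b := by
    rintro (_ | _) a b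
    exacts [(hom₁ a b).2, (hom₂ a b).2]
  refine ⟨DedekindCut (Amalgam f), inferInstance, fun x => principal (mk f false x),
    fun x => principal (mk f true x), principal_mk_injective (f := f) false,
    principal_mk_injective (f := f) true,
    fun x y => ⟨principal_mk_sup hsup (i := false) x y, principal_mk_inf hinf (i := false) x y⟩,
    fun x y => ⟨principal_mk_sup hsup (i := true) x y, principal_mk_inf hinf (i := true) x y⟩,
    funext fun a => principal_mk_map (f := f) false true a⟩
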